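/- Let 0 < 1/m ≪ ε ≪ d < 1 and suppose 1/m ≪ 1/k. Let V₁,…,V_k be disjoint clusters of size m with directed cycle C = V₁…V_k, and let G be a digraph on V₁ ∪ … ∪ V_k such that G[Vᵢ, Vᵢ₊₁] is (ε,d)-superregular for every i. For each i, let Vᵢ¹ ⊆ Vᵢ and Vᵢ₊₁² ⊆ Vᵢ₊₁ be sets of size at least (1−d/2)m with |Vᵢ¹| = |Vᵢ₊₁²|. Suppose F is a 1-regular digraph containing V₁ ∪ … ∪ V_k in its vertex set such that F[Vᵢ¹, Vᵢ₊₁²] is a perfect matching for each i, and every cycle of F contains a vertex in some Vᵢ¹. Then one can replace each matching F[Vᵢ¹, Vᵢ₊₁²] with a suitable perfect matching in G[Vᵢ¹, Vᵢ₊₁²] so that the resulting 1-regular digraph is a single cycle on V(F). -/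

import Mathlib

open Finset
open scoped Classical

/-- Number of edges of a bipartite graph `G` between `X` and `Y`. -/
noncomputable def eCnt {A B : Type*} [Fintype A] [Fintype B] (G : A → B → Prop)
    (X : Finset A) (Y : Finset B) : ℕ :=
  ((X ×ˢ Y).filter (fun p => G p.1 p.2)).card

/-- Density of the bipartite graph `G` between `X` and `Y`. -/
noncomputable def dens {A B : Type*} [Fintype A] [Fintype B] (G : A → B → Prop)
    (X : Finset A) (Y : Finset B) : ℝ :=
  (eCnt G X Y : ℝ) / ((X.card : ℝ) * (Y.card : ℝ))

/-- `G` is an ε-regular bipartite graph (with vertex classes `A` and `B`). -/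
def EpsRegularPair {A B : Type*} [Fintype A] [Fintype B] (G : A → B → Prop) (ε : ℝ) : Prop :=
  ∀ X : Finset A, ∀ Y : Finset B,
    ε * (Fintype.card A : ℝ) ≤ (X.card : ℝ) → ε * (Fintype.card B : ℝ) ≤ (Y.card : ℝ) →
    |dens G X Y - dens G Finset.univ Finset.univ| < ε

/-- `G` is an (ε,d)-superregular bipartite graph: it is ε-regular and all degrees
are at least `(d-ε)` times the size of the opposite class. -/
def SuperRegularPair {A B : Type*} [Fintype A] [Fintype B] (G : A → B → Prop) (ε d : ℝ) : Prop :=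
  EpsRegularPair G ε ∧
  (∀ a : A, (d - ε) * (Fintype.card B : ℝ) ≤ ((Finset.univ.filter (fun b => G a b)).card : ℝ)) ∧
  (∀ b : B, (d - ε) * (Fintype.card A : ℝ) ≤ ((Finset.univ.filter (fun a => G a b)).card : ℝ))

/-!
Start from any rematching (Hall's theorem in each superregular pair supplies the matchings) and
fix a matched vertex `w₀`; among all rematchings take one whose cycle through `w₀` is longest.
If a matched vertex is off that cycle, a rotation inside one cluster `V1 i` (redirecting a few of
its vertices to each other's successors along edges of `G`) strictly lengthens the cycle.
If some cluster meets the cycle but has `Ω(m)` vertices off it, a rotation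
`x ↦ σ x₁, x₁ ↦ σ x₂, x₂ ↦ σ x` with `x` on the cycle and `x₁, x₂` off it merges in `x₂`; the
required edges come from minimum degrees when few cluster vertices are on the cycle, and from
ε-regularity otherwise. If not, the cycle meets every cluster and then covers almost all of each,
and a vertex `z` off it is absorbed by `z ↦ σ x₁, x₁ ↦ σ x₂, x₂ ↦ σ x₃, x₃ ↦ σ z` with
`x₁, x₂, x₃` in this order along the cycle; the order is forced by taking `x₃` among the last
`εm` candidates. Finally every vertex reaches a matched vertex along `F`, with which the
rematching agrees off the matched vertices.
-/

namespace Equiv.Perm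

variable {α : Type*} {σ τ : Perm α} {M : Set α}

theorem SameCycle.setOf_eq {x y : α} (h : σ.SameCycle x y) :
    {w | σ.SameCycle x w} = {w | σ.SameCycle y w} :=
  Set.ext fun _ => ⟨h.symm.trans, h.trans⟩

theorem sameCycle_pow_apply_of_eqOn (hτ : ∀ y ∉ M, τ y = σ y) {x : α} {n : ℕ}
    (hn : ∀ j < n, (σ ^ j) x ∉ M) : τ.SameCycle x ((σ ^ n) x) := by
  induction n with
  | zero => exact SameCycle.refl _ _
  | succ n ih =>
    have hstep : τ ((σ ^ n) x) = (σ ^ (n + 1)) x := by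
      rw [hτ _ (hn n n.lt_succ_self), pow_succ', mul_apply]
    rw [← hstep]
    exact sameCycle_apply_right.mpr (ih fun j hj => hn j (hj.trans n.lt_succ_self))

theorem exists_mem_sameCycle_of_eqOn [Finite α] (hτ : ∀ y ∉ M, τ y = σ y) {x y : α}
    (hxy : σ.SameCycle x y) (hy : y ∈ M) : ∃ z ∈ M, σ.SameCycle x z ∧ τ.SameCycle x z := by
  classical
  have hex : ∃ n, (σ ^ n) x ∈ M := by
    obtain ⟨n, hn⟩ := hxy.exists_nat_pow_eq
    exact ⟨n, hn ▸ hy⟩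
  exact ⟨_, Nat.find_spec hex, sameCycle_pow_right.mpr (SameCycle.refl _ _),
    sameCycle_pow_apply_of_eqOn hτ fun j hj => Nat.find_min hex hj⟩

theorem sameCycle_of_eqOn [Finite α] (hτ : ∀ y ∉ M, τ y = σ y) {x : α} (hx : x ∈ M)
    (hM : ∀ y ∈ M, σ.SameCycle x y → τ.SameCycle x y) {w : α} (hw : σ.SameCycle x w) :
    τ.SameCycle x w := by
  obtain ⟨z, hzM, hσz, hτz⟩ := exists_mem_sameCycle_of_eqOn hτ hw.symm hx
  exact (hM z hzM (hw.trans hσz)).trans hτz.symm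

theorem setOf_sameCycle_ssubset_of_eqOn_three [Finite α] {x y z : α}
    (hτ : ∀ w ∉ ({x, y, z} : Set α), τ w = σ w) (hy : ¬σ.SameCycle x y)
    (hz : ¬σ.SameCycle x z) (hτz : τ z = σ x) :
    {w | σ.SameCycle x w} ⊂ {w | τ.SameCycle x w} := by
  have hsub : ∀ w, σ.SameCycle x w → τ.SameCycle x w := by
    refine fun w => sameCycle_of_eqOn hτ (by simp) ?_
    rintro w (rfl | rfl | rfl) h
    exacts [SameCycle.refl _ _, absurd h hy, absurd h hz]
  refine (Set.ssubset_iff_of_subset hsub).mpr ⟨z, ?_, hz⟩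
  have hx : τ.SameCycle x (τ z) := hτz ▸ hsub _ (sameCycle_apply_right.mpr (SameCycle.refl _ _))
  exact sameCycle_apply_right.mp hx

theorem SameCycle.exists_lt_minimalPeriod_pow_eq [Finite α] {x y : α} (h : σ.SameCycle x y) :
    ∃ n < Function.minimalPeriod σ x, (σ ^ n) x = y := by
  obtain ⟨n, rfl⟩ := h.exists_nat_pow_eq
  exact ⟨n % _, Nat.mod_lt _ (Function.minimalPeriod_pos_of_mem_periodicPts
    (σ.injective.mem_periodicPts x)), Function.iterate_mod_minimalPeriod_eq⟩

/-- From `z`, `τ` runs through the arc `σ x, …, σ^a x`, then the arc `σ^(b+1) x, …, x`, then the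
arc `σ^(a+1) x, …, σ^b x`, so its cycle through `x` contains `z` and the whole `σ`-cycle of `x`. -/
theorem setOf_sameCycle_ssubset_of_eqOn_four [Finite α] {x z : α} {a b : ℕ}
    (ha : 0 < a) (hab : a < b) (hb : b < Function.minimalPeriod σ x) (hz : ¬σ.SameCycle x z)
    (hτ : ∀ w ∉ ({z, x, (σ ^ a) x, (σ ^ b) x} : Set α), τ w = σ w)
    (hτz : τ z = σ x) (hτx : τ x = σ ((σ ^ a) x)) (hτa : τ ((σ ^ a) x) = σ ((σ ^ b) x)) :
    {w | σ.SameCycle x w} ⊂ {w | τ.SameCycle x w} := by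
  set ℓ := Function.minimalPeriod σ x
  have hinj : ∀ {i j}, i < ℓ → j < ℓ → (σ ^ i) x = (σ ^ j) x → i = j :=
    fun hi hj h => (Function.iterate_eq_iterate_iff_of_lt_minimalPeriod hi hj).mp h
  have hfree : ∀ j, 0 < j → j < ℓ → j ≠ a → j ≠ b →
      (σ ^ j) x ∉ ({z, x, (σ ^ a) x, (σ ^ b) x} : Set α) := by
    rintro j hj0 hjℓ hja hjb (h | h | h | h)
    · exact hz (h ▸ sameCycle_pow_right.mpr (SameCycle.refl _ _))
    · exact hj0.ne' (hinj hjℓ (hj0.trans hjℓ) (h.trans (pow_zero σ ▸ rfl)))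
    · exact hja (hinj hjℓ (hab.trans hb) h)
    · exact hjb (hinj hjℓ hb h)
  have hseg : ∀ s t, 0 < s → s ≤ t → t ≤ ℓ → (∀ j, s ≤ j → j < t → j ≠ a ∧ j ≠ b) →
      τ.SameCycle ((σ ^ s) x) ((σ ^ t) x) := by
    intro s t hs hst htℓ hj
    have h := sameCycle_pow_apply_of_eqOn hτ (x := (σ ^ s) x) (n := t - s) fun j hjt => by
      rw [← mul_apply, ← pow_add]
      exact hfree _ (by omega) (by omega) (hj _ (by omega) (by omega)).1
        (hj _ (by omega) (by omega)).2
    rwa [← mul_apply, ← pow_add, Nat.sub_add_cancel hst] at h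
  have hσ : ∀ n, σ ((σ ^ n) x) = (σ ^ (n + 1)) x := fun n => by rw [pow_succ', mul_apply]
  have hzx : τ.SameCycle z ((σ ^ a) x) := by
    refine sameCycle_apply_left.mp ?_
    have h := hseg 1 a one_pos ha (hab.trans hb).le fun j _ hj => ⟨hj.ne, (hj.trans hab).ne⟩
    rwa [pow_one, ← hτz] at h
  have hxb : τ.SameCycle x ((σ ^ b) x) := by
    refine sameCycle_apply_left.mp ?_
    rw [hτx, hσ]
    exact hseg (a + 1) b a.succ_pos hab hb.le fun j hj _ => ⟨by omega, by omega⟩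
  have hax : τ.SameCycle ((σ ^ a) x) x := by
    refine sameCycle_apply_left.mp ?_
    rw [hτa, hσ]
    have hret : (σ ^ ℓ) x = x := Function.iterate_minimalPeriod
    have h := hseg (b + 1) ℓ b.succ_pos hb le_rfl fun j hj _ => ⟨by omega, by omega⟩
    rwa [hret] at h
  have hsub : ∀ w, σ.SameCycle x w → τ.SameCycle x w := by
    refine fun w => sameCycle_of_eqOn hτ (by simp) ?_
    rintro w (rfl | rfl | rfl | rfl) h
    exacts [absurd h hz, SameCycle.refl _ _, hax.symm, hxb]
  exact (Set.ssubset_iff_of_subset hsub).mpr ⟨z, (hzx.trans hax).symm, hz⟩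

end Equiv.Perm

theorem Finset.card_filter_le_card_filter_sdiff_add {α : Type*} [DecidableEq α] (s t : Finset α)
    (q : α → Prop) :
    #{a ∈ s | q a} ≤ #{a ∈ s \ t | q a} + #t := by
  refine (Finset.card_le_card fun a ha => ?_).trans (Finset.card_union_le _ t)
  by_cases hat : a ∈ t <;> simp_all

theorem Finset.exists_subset_card_eq_forall_lt {β γ : Type*} [DecidableEq β] [LinearOrder γ]
    {f : β → γ} {L : ℕ} {T : Finset β} (hf : Set.InjOn f T) (hL : L ≤ #T) :
    ∃ Q ⊆ T, #Q = L ∧ ∀ a ∈ T \ Q, ∀ b ∈ Q, f a < f b := by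
  induction L generalizing T with
  | zero => exact ⟨∅, Finset.empty_subset _, rfl, by simp⟩
  | succ L ih =>
    obtain ⟨b₀, hb₀, hmax⟩ := T.exists_max_image f (Finset.card_pos.mp (by omega))
    obtain ⟨Q, hQ, hQL, hQtop⟩ := ih (hf.mono (Finset.erase_subset b₀ T))
      (by rw [Finset.card_erase_of_mem hb₀]; omega)
    have hb₀Q : b₀ ∉ Q := fun h => (Finset.mem_erase.mp (hQ h)).1 rfl
    refine ⟨insert b₀ Q, Finset.insert_subset hb₀ (hQ.trans (Finset.erase_subset b₀ T)),
      by rw [Finset.card_insert_of_notMem hb₀Q, hQL], fun a ha b hb => ?_⟩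
    simp only [Finset.mem_sdiff, Finset.mem_insert, not_or] at ha
    obtain ⟨haT, hab₀, haQ⟩ := ha
    rcases Finset.mem_insert.mp hb with rfl | hbQ
    · exact (hmax a haT).lt_of_ne fun h => hab₀ (hf haT hb₀ h)
    · exact hQtop a (Finset.mem_sdiff.mpr ⟨Finset.mem_erase.mpr ⟨hab₀, haT⟩, haQ⟩) b hbQ

open Fin.NatCast in
theorem Fin.forall_of_add_one {n : ℕ} {p : Fin (n + 1) → Prop} {i₀ : Fin (n + 1)} (h₀ : p i₀)
    (hs : ∀ j, p j → p (j + 1)) (j : Fin (n + 1)) : p j := by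
  have h : ∀ t : ℕ, p (i₀ + (t : Fin (n + 1))) := fun t => by
    induction t with
    | zero => simpa using h₀
    | succ t ih => simpa [Nat.cast_succ, add_assoc] using hs _ ih
  simpa using h (j - i₀).val


section RegularPair

variable {A B : Type*} [Fintype A] [Fintype B] {g : A → B → Prop} {ε d : ℝ}

theorem eCnt_eq_sum (g : A → B → Prop) (X : Finset A) (Y : Finset B) :
    eCnt g X Y = ∑ a ∈ X, #{b ∈ Y | g a b} := by
  simp only [eCnt, Finset.card_filter, Finset.sum_product]

theorem eCnt_flip (g : A → B → Prop) (X : Finset A) (Y : Finset B) :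
    eCnt (flip g) Y X = eCnt g X Y := by
  rw [eCnt_eq_sum, eCnt_eq_sum]
  simp only [Finset.card_filter]
  exact Finset.sum_comm

theorem dens_flip (g : A → B → Prop) (X : Finset A) (Y : Finset B) :
    dens (flip g) Y X = dens g X Y := by
  rw [_root_.dens, _root_.dens, eCnt_flip, mul_comm]

theorem SuperRegularPair.flip (h : SuperRegularPair g ε d) : SuperRegularPair (flip g) ε d :=
  ⟨fun Y X hY hX => by simpa only [dens_flip] using h.1 X Y hX hY, h.2.2, h.2.1⟩

theorem SuperRegularPair.sub_le_dens_univ [Nonempty A] [Nonempty B]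
    (h : SuperRegularPair g ε d) : d - ε ≤ dens g univ univ := by
  have hsum : (d - ε) * Fintype.card B * Fintype.card A ≤ eCnt g univ univ := by
    rw [eCnt_eq_sum, Nat.cast_sum]
    simpa [mul_comm] using Finset.card_nsmul_le_sum univ _ _ fun a _ => h.2.1 a
  rw [_root_.dens, le_div_iff₀ (by simp [Fintype.card_pos])]
  simpa [mul_assoc, mul_comm (Fintype.card B : ℝ)] using hsum

theorem SuperRegularPair.le_eCnt [Nonempty A] [Nonempty B] (h : SuperRegularPair g ε d)
    (hε : 0 < ε) {X : Finset A} {Y : Finset B} (hX : ε * Fintype.card A ≤ #X)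
    (hY : ε * Fintype.card B ≤ #Y) : (d - 2 * ε) * (#X * #Y) ≤ eCnt g X Y := by
  have hXY : (0 : ℝ) < #X * #Y := mul_pos
    (hX.trans_lt' (by have := Fintype.card_pos (α := A); positivity))
    (hY.trans_lt' (by have := Fintype.card_pos (α := B); positivity))
  have hdens : d - 2 * ε < dens g X Y := by
    linarith [(abs_lt.mp (h.1 X Y hX hY)).1, h.sub_le_dens_univ]
  rw [_root_.dens, lt_div_iff₀ hXY] at hdens
  exact hdens.le

theorem SuperRegularPair.exists_adj [Nonempty A] [Nonempty B] (h : SuperRegularPair g ε d)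
    (hε : 0 < ε) (hd : 2 * ε < d) {X : Finset A} {Y : Finset B}
    (hX : ε * Fintype.card A ≤ #X) (hY : ε * Fintype.card B ≤ #Y) : ∃ a ∈ X, ∃ b ∈ Y, g a b := by
  have hXY : (0 : ℝ) < #X * #Y := mul_pos
    (hX.trans_lt' (by have := Fintype.card_pos (α := A); positivity))
    (hY.trans_lt' (by have := Fintype.card_pos (α := B); positivity))
  have hpos : 0 < eCnt g X Y := by
    exact_mod_cast (mul_pos (by linarith) hXY).trans_le (h.le_eCnt hε hX hY)
  obtain ⟨⟨a, b⟩, hab⟩ := Finset.card_pos.mp hpos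
  simp only [Finset.mem_filter, Finset.mem_product] at hab
  exact ⟨a, hab.1.1, b, hab.1.2, hab.2⟩

theorem SuperRegularPair.card_lowDegree_lt [Nonempty A] [Nonempty B] (h : SuperRegularPair g ε d)
    (hε : 0 < ε) {Y : Finset B} (hY : ε * Fintype.card B ≤ #Y) :
    (#{a | (#{b ∈ Y | g a b} : ℝ) < (d - 2 * ε) * #Y} : ℝ) < ε * Fintype.card A := by
  set L := ({a | (#{b ∈ Y | g a b} : ℝ) < (d - 2 * ε) * #Y} : Finset A)
  by_contra! hL
  have hne : L.Nonempty := Finset.card_pos.mp <| by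
    have := Fintype.card_pos (α := A)
    have : (0 : ℝ) < #L := hL.trans_lt' (by positivity)
    exact_mod_cast this
  have hlt : (eCnt g L Y : ℝ) < (d - 2 * ε) * (#L * #Y) := by
    rw [eCnt_eq_sum, Nat.cast_sum]
    calc ∑ a ∈ L, (#{b ∈ Y | g a b} : ℝ) < ∑ _a ∈ L, (d - 2 * ε) * #Y :=
          Finset.sum_lt_sum_of_nonempty hne fun a ha => (Finset.mem_filter.mp ha).2
      _ = (d - 2 * ε) * (#L * #Y) := by rw [Finset.sum_const, nsmul_eq_mul]; ring
  exact (h.le_eCnt hε hL hY).not_gt hlt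

theorem SuperRegularPair.le_card_filter (h : SuperRegularPair g ε d) (a : A) (Y : Finset B) :
    (d - ε) * Fintype.card B - (Fintype.card B - #Y) ≤ #{b ∈ Y | g a b} := by
  have hsub : ({b | g a b} : Finset B) ⊆ {b ∈ Y | g a b} ∪ Yᶜ := fun b hb => by
    by_cases hbY : b ∈ Y <;> simp_all
  have hle : (#{b | g a b} : ℝ) ≤ #{b ∈ Y | g a b} + (Fintype.card B - #Y) := by
    rw [← Nat.cast_sub (Finset.card_le_univ Y), ← Finset.card_compl]
    exact_mod_cast (Finset.card_le_card hsub).trans (Finset.card_union_le _ _)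
  linarith [h.2.1 a]

theorem SuperRegularPair.card_le_card_biUnion [Nonempty A] {g : A → A → Prop}
    (h : SuperRegularPair g ε d) (hε : 0 < ε) (hd : 4 * ε ≤ d) {S T : Finset A}
    (hS : (1 - d / 2) * Fintype.card A ≤ #S) (hT : (1 - d / 2) * Fintype.card A ≤ #T)
    (hST : #S = #T) {s : Finset A} (hs : s ⊆ S) :
    #s ≤ #(s.biUnion fun a => {b ∈ T | g a b}) := by
  set N := s.biUnion fun a => {b ∈ T | g a b}
  have hdegT : ∀ a, (d / 2 - ε) * Fintype.card A ≤ #{b ∈ T | g a b} := fun a => by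
    linarith [h.le_card_filter a T]
  have hdegS : ∀ b, (d / 2 - ε) * Fintype.card A ≤ #{a ∈ S | g a b} := fun b => by
    have h' : (d - ε) * Fintype.card A - (Fintype.card A - #S) ≤ #{a ∈ S | g a b} :=
      h.flip.le_card_filter b S
    linarith
  have hεn : ε * Fintype.card A ≤ (d / 2 - ε) * Fintype.card A :=
    mul_le_mul_of_nonneg_right (by linarith) (Nat.cast_nonneg _)
  rcases s.eq_empty_or_nonempty with rfl | ⟨a, ha⟩
  · simp
  rcases le_or_gt (#s : ℝ) ((d / 2 - ε) * Fintype.card A) with hsmall | hbig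
  · have hN : #{b ∈ T | g a b} ≤ #N :=
      Finset.card_le_card (Finset.subset_biUnion_of_mem (fun a => {b ∈ T | g a b}) ha)
    have : (#s : ℝ) ≤ #N := hsmall.trans ((hdegT a).trans (by exact_mod_cast hN))
    exact_mod_cast this
  rcases le_or_gt (#s : ℝ) (#T - ε * Fintype.card A) with hmid | hlarge
  · -- by regularity, `s` has a neighbour in any large part of `T`
    have hmiss : (#(T \ N) : ℝ) < ε * Fintype.card A := by
      by_contra! hTN
      obtain ⟨a', ha', b, hb, hab⟩ := h.exists_adj hε (by linarith) (X := s) (by linarith) hTN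
      rw [Finset.mem_sdiff] at hb
      exact hb.2 (Finset.mem_biUnion.mpr ⟨a', ha', Finset.mem_filter.mpr ⟨hb.1, hab⟩⟩)
    have hT : (#T : ℝ) ≤ #(T \ N) + #N := by exact_mod_cast Finset.card_le_card_sdiff_add_card
    have : (#s : ℝ) ≤ #N := by linarith
    exact_mod_cast this
  · -- `s` misses so little of `S` that every vertex of `T` has a neighbour in `s`
    have hrest : (#(S \ s) : ℝ) < ε * Fintype.card A := by
      rw [Finset.card_sdiff_of_subset hs, Nat.cast_sub (Finset.card_le_card hs), hST]
      linarith
    have hTN : T ⊆ N := fun b hb => by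
      have hsplit : (#{a ∈ S | g a b} : ℝ) ≤ #({a ∈ S | g a b} \ (S \ s)) + #(S \ s) := by
        exact_mod_cast Finset.card_le_card_sdiff_add_card
      obtain ⟨a', ha'⟩ : ({a ∈ S | g a b} \ (S \ s)).Nonempty := by
        rw [← Finset.card_pos]
        have : (0 : ℝ) < #({a ∈ S | g a b} \ (S \ s)) := by linarith [hdegS b]
        exact_mod_cast this
      simp only [Finset.mem_sdiff, Finset.mem_filter, not_and, not_not] at ha'
      exact Finset.mem_biUnion.mpr ⟨a', ha'.2 ha'.1.1, Finset.mem_filter.mpr ⟨hb, ha'.1.2⟩⟩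
    calc #s ≤ #S := Finset.card_le_card hs
      _ = #T := hST
      _ ≤ #N := Finset.card_le_card hTN

theorem SuperRegularPair.exists_injOn [Nonempty A] {g : A → A → Prop}
    (h : SuperRegularPair g ε d) (hε : 0 < ε) (hd : 4 * ε ≤ d) {S T : Finset A}
    (hS : (1 - d / 2) * Fintype.card A ≤ #S) (hT : (1 - d / 2) * Fintype.card A ≤ #T)
    (hST : #S = #T) : ∃ f : A → A, (∀ a ∈ S, f a ∈ T ∧ g a (f a)) ∧ Set.InjOn f S := by
  obtain ⟨f, hf, hfT⟩ := (Finset.all_card_le_biUnion_card_iff_existsInjective'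
    fun a : S => ({b ∈ T | g a b} : Finset A)).mp fun s => by
      have hall := h.card_le_card_biUnion hε hd hS hT hST (s := s.image Subtype.val)
        fun a ha => by obtain ⟨⟨a, haS⟩, -, rfl⟩ := Finset.mem_image.mp ha; exact haS
      rwa [Finset.card_image_of_injective _ Subtype.val_injective, Finset.image_biUnion] at hall
  refine ⟨fun a => if ha : a ∈ S then f ⟨a, ha⟩ else a, fun a ha => ?_, fun a ha b hb hab => ?_⟩
  · simpa [ha] using hfT ⟨a, ha⟩
  · have hab' : f ⟨a, ha⟩ = f ⟨b, hb⟩ := by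
      simpa [Finset.mem_coe.mp ha, Finset.mem_coe.mp hb] using hab
    exact congrArg Subtype.val (hf hab')

end RegularPair

section Hierarchy

variable {m : ℕ} {ε d : ℝ}

/-- The constants obey `0 < 1/m ≪ ε ≪ d < 1`, in the explicit form used below. -/
structure IsHierarchy (m : ℕ) (ε d : ℝ) : Prop where
  eps_pos : 0 < ε
  d_pos : 0 < d
  d_lt_one : d < 1
  eps_le : 100 * ε ≤ d ^ 2 * (1 - d)
  ten_le : 10 ≤ ε * m

theorem IsHierarchy.m_pos (hp : IsHierarchy m ε d) : 0 < m := by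
  rcases Nat.eq_zero_or_pos m with rfl | h
  · linarith [hp.ten_le, show ε * ((0 : ℕ) : ℝ) = 0 by simp]
  · exact h

theorem IsHierarchy.hundred_eps_le (hp : IsHierarchy m ε d) : 100 * ε ≤ d * (1 - d) := by
  have h1 : 0 < 1 - d := sub_pos.mpr hp.d_lt_one
  nlinarith [hp.eps_le, mul_pos (mul_pos hp.d_pos h1) h1]

theorem IsHierarchy.eight_eps_le (hp : IsHierarchy m ε d) : 8 * ε ≤ d := by
  nlinarith [hp.hundred_eps_le, hp.d_pos, hp.d_lt_one]

theorem IsHierarchy.two_eps_lt (hp : IsHierarchy m ε d) : 2 * ε < d := by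
  linarith [hp.eight_eps_le, hp.eps_pos]

theorem IsHierarchy.three_eps_le_mul (hp : IsHierarchy m ε d) :
    3 * ε ≤ (d - 2 * ε) * (d / 4 - ε) := by
  have h : d / 2 * (d / 8) ≤ (d - 2 * ε) * (d / 4 - ε) :=
    mul_le_mul (by linarith [hp.eight_eps_le, hp.d_pos]) (by linarith [hp.eight_eps_le])
      (by linarith [hp.d_pos]) (by linarith [hp.eight_eps_le, hp.d_pos])
  nlinarith [hp.eps_le, hp.d_pos]

theorem IsHierarchy.eps_le_mul (hp : IsHierarchy m ε d) :
    ε ≤ (d - 2 * ε) * (d * (1 - d) / 4) := by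
  have h : d / 2 * (d * (1 - d) / 4) ≤ (d - 2 * ε) * (d * (1 - d) / 4) :=
    mul_le_mul_of_nonneg_right (by linarith [hp.eight_eps_le, hp.d_pos])
      (by nlinarith [hp.d_pos, hp.d_lt_one])
  nlinarith [hp.eps_le, hp.eps_pos]

end Hierarchy

section Rematching

open Equiv Equiv.Perm

variable {k m : ℕ} {G : Fin (k + 1) × Fin m → Fin (k + 1) × Fin m → Prop}
  {V1 V2 : Fin (k + 1) → Finset (Fin m)} {W : Type*} {e : Fin (k + 1) × Fin m ↪ W}
  {F P : Perm W} {ε d : ℝ} {i : Fin (k + 1)} {w₀ : W}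

variable (G V1 V2 e F) in
/-- `P` is obtained from `F` by replacing each matching `F[V1 i, V2 (i + 1)]` by a perfect
matching of `G[V1 i, V2 (i + 1)]`. -/
def IsRematching (P : Perm W) : Prop :=
  (∀ w, (∀ i, ∀ u ∈ V1 i, w ≠ e (i, u)) → P w = F w) ∧
  ∀ i, ∀ u ∈ V1 i, ∃ v ∈ V2 (i + 1), P (e (i, u)) = e (i + 1, v) ∧ G (i, u) (i + 1, v)

variable (e) in
/-- The vertex of cluster `i + 1` to which `P` sends the vertex `u` of cluster `i` (junk `u` if
there is none). -/
noncomputable def clusterSucc (P : Perm W) (i : Fin (k + 1)) (u : Fin m) : Fin m :=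
  if h : ∃ v, P (e (i, u)) = e (i + 1, v) then h.choose else u

variable (V1 e) in
noncomputable def cyclePart (P : Perm W) (w₀ : W) (i : Fin (k + 1)) : Finset (Fin m) :=
  {u ∈ V1 i | P.SameCycle w₀ (e (i, u))}

theorem mem_cyclePart {u : Fin m} :
    u ∈ cyclePart V1 e P w₀ i ↔ u ∈ V1 i ∧ P.SameCycle w₀ (e (i, u)) := by
  simp [cyclePart]

theorem mem_sdiff_cyclePart {u : Fin m} :
    u ∈ V1 i \ cyclePart V1 e P w₀ i ↔ u ∈ V1 i ∧ ¬P.SameCycle w₀ (e (i, u)) := by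
  simp only [cyclePart, Finset.mem_sdiff, Finset.mem_filter]
  tauto

theorem sub_card_cyclePart_le (q : Fin m → Prop) :
    (#{u ∈ V1 i | q u} : ℝ) - #(cyclePart V1 e P w₀ i) ≤
      #{u ∈ V1 i \ cyclePart V1 e P w₀ i | q u} := by
  have h : (#{u ∈ V1 i | q u} : ℝ) ≤
      #{u ∈ V1 i \ cyclePart V1 e P w₀ i | q u} + #(cyclePart V1 e P w₀ i) := by
    exact_mod_cast Finset.card_filter_le_card_filter_sdiff_add _ _ q
  linarith

theorem sub_card_sdiff_cyclePart_le (q : Fin m → Prop) :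
    (#{u ∈ V1 i | q u} : ℝ) - #(V1 i \ cyclePart V1 e P w₀ i) ≤
      #{u ∈ cyclePart V1 e P w₀ i | q u} := by
  have h := Finset.card_filter_le_card_filter_sdiff_add (V1 i) (V1 i \ cyclePart V1 e P w₀ i) q
  rw [Finset.sdiff_sdiff_eq_self (s := V1 i) (t := cyclePart V1 e P w₀ i)
    (Finset.filter_subset _ _)] at h
  have h' : (#{u ∈ V1 i | q u} : ℝ) ≤
      #{u ∈ cyclePart V1 e P w₀ i | q u} + #(V1 i \ cyclePart V1 e P w₀ i) := by exact_mod_cast h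
  linarith

namespace IsRematching

theorem clusterSucc_spec (hP : IsRematching G V1 V2 e F P) {u : Fin m} (hu : u ∈ V1 i) :
    P (e (i, u)) = e (i + 1, clusterSucc e P i u) ∧ clusterSucc e P i u ∈ V2 (i + 1) ∧
      G (i, u) (i + 1, clusterSucc e P i u) := by
  obtain ⟨v, hv, hPv, hG⟩ := hP.2 i u hu
  have hex : ∃ v, P (e (i, u)) = e (i + 1, v) := ⟨v, hPv⟩
  have hchoose : clusterSucc e P i u = v := by
    rw [clusterSucc, dif_pos hex]
    simpa using e.injective (hex.choose_spec.symm.trans hPv)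
  rw [hchoose]
  exact ⟨hPv, hv, hG⟩

theorem injOn_clusterSucc (hP : IsRematching G V1 V2 e F P) (i : Fin (k + 1)) :
    Set.InjOn (clusterSucc e P i) (V1 i) := fun u hu u' hu' h => by
  have h' : P (e (i, u)) = P (e (i, u')) := by
    rw [(hP.clusterSucc_spec hu).1, (hP.clusterSucc_spec hu').1, h]
  simpa using e.injective (P.injective h')

theorem card_filter_clusterSucc (hP : IsRematching G V1 V2 e F P)
    {S : Finset (Fin m)} (hS : S ⊆ V1 i) (q : Fin m → Prop) :
    #{u ∈ S | q (clusterSucc e P i u)} = #{v ∈ S.image (clusterSucc e P i) | q v} := by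
  rw [Finset.filter_image, Finset.card_image_of_injOn
    ((hP.injOn_clusterSucc i).mono fun u hu => hS (Finset.mem_filter.mp hu).1)]

theorem image_clusterSucc (hP : IsRematching G V1 V2 e F P) (hcard : #(V1 i) = #(V2 (i + 1))) :
    (V1 i).image (clusterSucc e P i) = V2 (i + 1) :=
  Finset.eq_of_subset_of_card_le
    (fun v hv => by
      obtain ⟨u, hu, rfl⟩ := Finset.mem_image.mp hv
      exact (hP.clusterSucc_spec hu).2.1)
    (by rw [Finset.card_image_of_injOn (hP.injOn_clusterSucc i), hcard])

theorem of_eqOn (hP : IsRematching G V1 V2 e F P) {τ : Perm W}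
    {S : Finset (Fin m)} (hS : S ⊆ V1 i) (hτ : ∀ w, (∀ u ∈ S, w ≠ e (i, u)) → τ w = P w)
    (hτS : ∀ u ∈ S, ∃ v ∈ V2 (i + 1), τ (e (i, u)) = e (i + 1, v) ∧ G (i, u) (i + 1, v)) :
    IsRematching G V1 V2 e F τ := by
  refine ⟨fun w hw => (hτ w fun u hu => hw i u (hS hu)).trans (hP.1 w hw), fun j u hu => ?_⟩
  by_cases h : ∃ u' ∈ S, (j, u) = (i, u')
  · obtain ⟨u', hu', hju⟩ := h
    obtain ⟨rfl, rfl⟩ := Prod.mk.inj hju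
    exact hτS _ hu'
  · rw [hτ _ fun u' hu' hju => h ⟨u', hu', e.injective hju⟩]
    exact hP.2 j u hu

theorem exists_ssubset_of_rotate3 [Finite W] (hP : IsRematching G V1 V2 e F P)
    {u u₁ u₂ : Fin m} (hu : u ∈ V1 i) (hu₁ : u₁ ∈ V1 i) (hu₂ : u₂ ∈ V1 i)
    (hw : P.SameCycle w₀ (e (i, u))) (h₁ : ¬P.SameCycle w₀ (e (i, u₁)))
    (h₂ : ¬P.SameCycle w₀ (e (i, u₂))) (g₀ : G (i, u) (i + 1, clusterSucc e P i u₁))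
    (g₁ : G (i, u₁) (i + 1, clusterSucc e P i u₂)) (g₂ : G (i, u₂) (i + 1, clusterSucc e P i u)) :
    ∃ P', IsRematching G V1 V2 e F P' ∧ {w | P.SameCycle w₀ w} ⊂ {w | P'.SameCycle w₀ w} := by
  set x := e (i, u)
  set x₁ := e (i, u₁)
  set x₂ := e (i, u₂)
  have hx₁ : x ≠ x₁ := fun h => h₁ (h ▸ hw)
  have hx₂ : x ≠ x₂ := fun h => h₂ (h ▸ hw)
  set τ := P * (swap x x₁ * swap x₁ x₂)
  have hτx : τ x = P x₁ := by simp [τ, swap_apply_of_ne_of_ne hx₁ hx₂]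
  have hτx₂ : τ x₂ = P x := by simp [τ]
  have hτx₁ : x₁ ≠ x₂ → τ x₁ = P x₂ := fun h => by
    simp [τ, swap_apply_of_ne_of_ne hx₂.symm (Ne.symm h)]
  have hτ : ∀ w ∉ ({x, x₁, x₂} : Set W), τ w = P w := fun w hw => by
    simp only [Set.mem_insert_iff, Set.mem_singleton_iff, not_or] at hw
    simp [τ, swap_apply_of_ne_of_ne hw.2.1 hw.2.2, swap_apply_of_ne_of_ne hw.1 hw.2.1]
  refine ⟨τ, hP.of_eqOn (i := i) (S := {u, u₁, u₂}) (by simp [Finset.insert_subset_iff, *])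
    (fun w hw => hτ w ?_) ?_, ?_⟩
  · simp only [Set.mem_insert_iff, Set.mem_singleton_iff, not_or]
    exact ⟨hw u (by simp), hw u₁ (by simp), hw u₂ (by simp)⟩
  · simp only [Finset.mem_insert, Finset.mem_singleton]
    rintro a (rfl | rfl | rfl)
    · exact ⟨_, (hP.clusterSucc_spec hu₁).2.1, hτx.trans (hP.clusterSucc_spec hu₁).1, g₀⟩
    · by_cases h : a = u₂
      · subst h
        exact ⟨_, (hP.clusterSucc_spec hu).2.1, hτx₂.trans (hP.clusterSucc_spec hu).1, g₂⟩
      · exact ⟨_, (hP.clusterSucc_spec hu₂).2.1,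
          (hτx₁ fun h' => h (by simpa using e.injective h')).trans
            (hP.clusterSucc_spec hu₂).1, g₁⟩
    · exact ⟨_, (hP.clusterSucc_spec hu).2.1, hτx₂.trans (hP.clusterSucc_spec hu).1, g₂⟩
  · have hss := setOf_sameCycle_ssubset_of_eqOn_three hτ (fun h => h₁ (hw.trans h))
      (fun h => h₂ (hw.trans h)) hτx₂
    have hτw₀ : τ.SameCycle x w₀ := hss.subset hw.symm
    rwa [hw.symm.setOf_eq, hτw₀.setOf_eq] at hss

theorem exists_ssubset_of_rotate4 [Finite W] (hP : IsRematching G V1 V2 e F P)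
    {z u₁ u₂ u₃ : Fin m} (hz : z ∈ V1 i) (hu₁ : u₁ ∈ V1 i) (hu₂ : u₂ ∈ V1 i)
    (hu₃ : u₃ ∈ V1 i) (hwz : ¬P.SameCycle w₀ (e (i, z))) (hw : P.SameCycle w₀ (e (i, u₁)))
    {a b : ℕ} (ha : 0 < a) (hab : a < b) (hb : b < Function.minimalPeriod P (e (i, u₁)))
    (h₂ : (P ^ a) (e (i, u₁)) = e (i, u₂)) (h₃ : (P ^ b) (e (i, u₁)) = e (i, u₃))
    (g₀ : G (i, z) (i + 1, clusterSucc e P i u₁)) (g₁ : G (i, u₁) (i + 1, clusterSucc e P i u₂))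
    (g₂ : G (i, u₂) (i + 1, clusterSucc e P i u₃)) (g₃ : G (i, u₃) (i + 1, clusterSucc e P i z)) :
    ∃ P', IsRematching G V1 V2 e F P' ∧ {w | P.SameCycle w₀ w} ⊂ {w | P'.SameCycle w₀ w} := by
  set x := e (i, u₁)
  set y := e (i, z)
  have hxy : ¬P.SameCycle x y := fun h => hwz (hw.trans h)
  have hpos : ∀ {n}, n ≤ b → n ≠ 0 → (P ^ n) x ≠ x := fun hn hn0 h => hn0 <|
    (Function.iterate_eq_iterate_iff_of_lt_minimalPeriod (hn.trans_lt hb)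
      ((Nat.zero_le _).trans_lt hb)).mp h
  have hx₂ : (P ^ a) x ≠ x := hpos hab.le ha.ne'
  have hx₃ : (P ^ b) x ≠ x := hpos le_rfl (ha.trans hab).ne'
  have hx₂₃ : (P ^ a) x ≠ (P ^ b) x := fun h => hab.ne <|
    (Function.iterate_eq_iterate_iff_of_lt_minimalPeriod (hab.trans hb) hb).mp h
  have hy : ∀ n, y ≠ (P ^ n) x := fun n h =>
    hxy (h ▸ sameCycle_pow_right.mpr (SameCycle.refl _ _))
  have hyx : y ≠ x := by simpa using hy 0
  set τ := P * (swap y x * swap x ((P ^ a) x) * swap ((P ^ a) x) ((P ^ b) x))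
  have hy₂ := hy a
  have hy₃ := hy b
  have hτy : τ y = P x := by
    simp only [τ, Perm.mul_apply, swap_apply_of_ne_of_ne hy₂ hy₃,
      swap_apply_of_ne_of_ne hyx hy₂, swap_apply_left]
  have hτx : τ x = P ((P ^ a) x) := by
    simp only [τ, Perm.mul_apply, swap_apply_of_ne_of_ne hx₂.symm hx₃.symm, swap_apply_left,
      swap_apply_of_ne_of_ne hy₂.symm hx₂]
  have hτx₂ : τ ((P ^ a) x) = P ((P ^ b) x) := by
    simp only [τ, Perm.mul_apply, swap_apply_left, swap_apply_of_ne_of_ne hx₃ hx₂₃.symm,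
      swap_apply_of_ne_of_ne hy₃.symm hx₃]
  have hτx₃ : τ ((P ^ b) x) = P y := by
    simp only [τ, Perm.mul_apply, swap_apply_right]
  have hτ : ∀ w ∉ ({y, x, (P ^ a) x, (P ^ b) x} : Set W), τ w = P w := fun w hw => by
    simp only [Set.mem_insert_iff, Set.mem_singleton_iff, not_or] at hw
    simp only [τ, Perm.mul_apply, swap_apply_of_ne_of_ne hw.2.2.1 hw.2.2.2,
      swap_apply_of_ne_of_ne hw.2.1 hw.2.2.1, swap_apply_of_ne_of_ne hw.1 hw.2.1]
  refine ⟨τ, hP.of_eqOn (i := i) (S := {z, u₁, u₂, u₃}) (by simp [Finset.insert_subset_iff, *])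
    (fun w hw => hτ w ?_) ?_, ?_⟩
  · simp only [Set.mem_insert_iff, Set.mem_singleton_iff, not_or, h₂, h₃]
    exact ⟨hw z (by simp), hw u₁ (by simp), hw u₂ (by simp), hw u₃ (by simp)⟩
  · simp only [Finset.mem_insert, Finset.mem_singleton]
    rintro c (rfl | rfl | rfl | rfl)
    · exact ⟨_, (hP.clusterSucc_spec hu₁).2.1, hτy.trans (hP.clusterSucc_spec hu₁).1, g₀⟩
    · exact ⟨_, (hP.clusterSucc_spec hu₂).2.1,
        hτx.trans (h₂ ▸ (hP.clusterSucc_spec hu₂).1), g₁⟩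
    · exact ⟨_, (hP.clusterSucc_spec hu₃).2.1,
        (h₂ ▸ hτx₂).trans (h₃ ▸ (hP.clusterSucc_spec hu₃).1), g₂⟩
    · exact ⟨_, (hP.clusterSucc_spec hz).2.1, (h₃ ▸ hτx₃).trans (hP.clusterSucc_spec hz).1, g₃⟩
  · have hss := setOf_sameCycle_ssubset_of_eqOn_four ha hab hb hxy hτ hτy hτx hτx₂
    have hτw₀ : τ.SameCycle x w₀ := hss.subset hw.symm
    rwa [hw.symm.setOf_eq, hτw₀.setOf_eq] at hss

end IsRematching

theorem exists_isRematching [Finite W]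
    (hF : ∀ i, ∀ v ∈ V2 (i + 1), ∃ u ∈ V1 i, F (e (i, u)) = e (i + 1, v))
    (hM : ∀ i, ∃ M : Fin m → Fin m,
      (∀ u ∈ V1 i, M u ∈ V2 (i + 1) ∧ G (i, u) (i + 1, M u)) ∧ Set.InjOn M (V1 i)) :
    ∃ P, IsRematching G V1 V2 e F P := by
  choose M hM hMinj using hM
  let f : {p : Fin (k + 1) × Fin m // p.2 ∈ V1 p.1} → W := fun p => e p
  have hf : Function.Injective f := fun p q h => Subtype.ext (e.injective h)
  let φ := Function.extend f (fun p => e (p.1.1 + 1, M p.1.1 p.1.2)) F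
  have hφf : ∀ p, φ (f p) = e (p.1.1 + 1, M p.1.1 p.1.2) := hf.extend_apply _ _
  have hφF : ∀ w, (¬∃ p, f p = w) → φ w = F w := Function.extend_apply' _ _
  -- a new matching edge never ends where an unchanged edge of `F` does
  have hnew : ∀ (p : {p : Fin (k + 1) × Fin m // p.2 ∈ V1 p.1}) w, (¬∃ q, f q = w) →
      e (p.1.1 + 1, M p.1.1 p.1.2) ≠ F w := by
    intro p w hw h
    obtain ⟨u, hu, hFu⟩ := hF p.1.1 _ (hM _ _ p.2).1
    exact hw ⟨⟨(p.1.1, u), hu⟩, F.injective (hFu.trans h)⟩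
  have hφ : Function.Injective φ := by
    intro a b hab
    by_cases ha : ∃ p, f p = a <;> by_cases hb : ∃ q, f q = b
    · obtain ⟨⟨⟨i, u⟩, hu⟩, rfl⟩ := ha
      obtain ⟨⟨⟨j, v⟩, hv⟩, rfl⟩ := hb
      simp only [hφf, EmbeddingLike.apply_eq_iff_eq, Prod.mk.injEq, add_left_inj] at hab
      obtain ⟨rfl, h⟩ := hab
      obtain rfl : u = v := hMinj i (Finset.mem_coe.mpr hu) (Finset.mem_coe.mpr hv) h
      rfl
    · obtain ⟨p, rfl⟩ := ha
      exact absurd (by rw [← hφF b hb, ← hφf p, hab]) (hnew p b hb)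
    · obtain ⟨q, rfl⟩ := hb
      exact absurd (by rw [← hφF a ha, ← hφf q, hab]) (hnew q a ha)
    · rw [hφF a ha, hφF b hb] at hab
      exact F.injective hab
  refine ⟨Equiv.ofBijective φ (Finite.injective_iff_bijective.mp hφ), fun w hw => hφF w ?_,
    fun i u hu => ⟨M i u, (hM i u hu).1, hφf ⟨(i, u), hu⟩, (hM i u hu).2⟩⟩
  rintro ⟨⟨⟨i, u⟩, hu⟩, rfl⟩
  exact hw i u hu rfl

theorem le_card_filter_adj (hG : SuperRegularPair (fun u v => G (i, u) (i + 1, v)) ε d)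
    (hV1 : (1 - d / 2) * m ≤ #(V1 i)) (v : Fin m) :
    (d / 2 - ε) * m ≤ #{u ∈ V1 i | G (i, u) (i + 1, v)} := by
  have h : (d - ε) * Fintype.card (Fin m) - (Fintype.card (Fin m) - #(V1 i)) ≤
      #{u ∈ V1 i | G (i, u) (i + 1, v)} := hG.flip.le_card_filter v (V1 i)
  rw [Fintype.card_fin] at h
  linarith

namespace IsRematching

theorem le_card_filter_adj_clusterSucc (hP : IsRematching G V1 V2 e F P)
    (hG : SuperRegularPair (fun u v => G (i, u) (i + 1, v)) ε d)
    (hV2 : (1 - d / 2) * m ≤ #(V2 (i + 1))) (hcard : #(V1 i) = #(V2 (i + 1))) (u : Fin m) :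
    (d / 2 - ε) * m ≤ #{u' ∈ V1 i | G (i, u) (i + 1, clusterSucc e P i u')} := by
  have h : (d - ε) * m - (m - #(V2 (i + 1))) ≤ #{v ∈ V2 (i + 1) | G (i, u) (i + 1, v)} := by
    simpa using hG.le_card_filter u (V2 (i + 1))
  rw [hP.card_filter_clusterSucc (q := fun v => G (i, u) (i + 1, v)) subset_rfl,
    hP.image_clusterSucc hcard]
  linarith

theorem exists_ssubset_of_le_card_rotate3 [Finite W] (hp : IsHierarchy m ε d)
    (hG : SuperRegularPair (fun u v => G (i, u) (i + 1, v)) ε d) (hP : IsRematching G V1 V2 e F P)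
    {u : Fin m} (hu : u ∈ cyclePart V1 e P w₀ i)
    (hA : ε * m ≤ #{u' ∈ V1 i \ cyclePart V1 e P w₀ i | G (i, u) (i + 1, clusterSucc e P i u')})
    (hB : ε * m ≤ #{u' ∈ V1 i \ cyclePart V1 e P w₀ i | G (i, u') (i + 1, clusterSucc e P i u)}) :
    ∃ P', IsRematching G V1 V2 e F P' ∧ {w | P.SameCycle w₀ w} ⊂ {w | P'.SameCycle w₀ w} := by
  have : Nonempty (Fin m) := ⟨⟨0, hp.m_pos⟩⟩
  set B := ({u' ∈ V1 i \ cyclePart V1 e P w₀ i | G (i, u') (i + 1, clusterSucc e P i u)} :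
    Finset (Fin m))
  have hBsub : B ⊆ V1 i := fun u' hu' => (Finset.mem_sdiff.mp (Finset.mem_filter.mp hu').1).1
  have hBim : #(B.image (clusterSucc e P i)) = #B :=
    Finset.card_image_of_injOn ((hP.injOn_clusterSucc i).mono hBsub)
  obtain ⟨u₁, hu₁, v, hv, g₁⟩ := hG.exists_adj hp.eps_pos hp.two_eps_lt
    (Y := B.image (clusterSucc e P i)) (by simpa using hA) (by simpa [hBim] using hB)
  obtain ⟨u₂, hu₂, rfl⟩ := Finset.mem_image.mp hv
  rw [Finset.mem_filter, mem_sdiff_cyclePart] at hu₁ hu₂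
  rw [mem_cyclePart] at hu
  exact hP.exists_ssubset_of_rotate3 hu.1 hu₁.1.1 hu₂.1.1 hu.2 hu₁.1.2 hu₂.1.2 hu₁.2 g₁ hu₂.2

theorem exists_ssubset_of_card_cyclePart_le [Finite W] (hp : IsHierarchy m ε d)
    (hG : SuperRegularPair (fun u v => G (i, u) (i + 1, v)) ε d)
    (hV1 : (1 - d / 2) * m ≤ #(V1 i)) (hV2 : (1 - d / 2) * m ≤ #(V2 (i + 1)))
    (hcard : #(V1 i) = #(V2 (i + 1))) (hP : IsRematching G V1 V2 e F P) {u : Fin m}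
    (hu : u ∈ cyclePart V1 e P w₀ i)
    (hsmall : #(cyclePart V1 e P w₀ i) ≤ (d / 2 - 2 * ε) * m) :
    ∃ P', IsRematching G V1 V2 e F P' ∧ {w | P.SameCycle w₀ w} ⊂ {w | P'.SameCycle w₀ w} := by
  refine hP.exists_ssubset_of_le_card_rotate3 hp hG hu ?_ ?_
  · refine le_trans ?_ (sub_card_cyclePart_le _)
    linarith [hP.le_card_filter_adj_clusterSucc hG hV2 hcard u]
  · refine le_trans ?_ (sub_card_cyclePart_le _)
    linarith [le_card_filter_adj hG hV1 (clusterSucc e P i u)]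

theorem exists_ssubset_of_lt_card_cyclePart [Finite W] (hp : IsHierarchy m ε d)
    (hG : SuperRegularPair (fun u v => G (i, u) (i + 1, v)) ε d) (hP : IsRematching G V1 V2 e F P)
    (hC : (d / 2 - 2 * ε) * m < #(cyclePart V1 e P w₀ i))
    (hX : d * (1 - d) / 4 * m ≤ #(V1 i \ cyclePart V1 e P w₀ i)) :
    ∃ P', IsRematching G V1 V2 e F P' ∧ {w | P.SameCycle w₀ w} ⊂ {w | P'.SameCycle w₀ w} := by
  have : Nonempty (Fin m) := ⟨⟨0, hp.m_pos⟩⟩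
  set C := cyclePart V1 e P w₀ i
  set X := V1 i \ C
  set σ := clusterSucc e P i
  have hεX : ε * m ≤ (d - 2 * ε) * #X := calc
    ε * m ≤ (d - 2 * ε) * (d * (1 - d) / 4) * m :=
      mul_le_mul_of_nonneg_right hp.eps_le_mul (Nat.cast_nonneg m)
    _ = (d - 2 * ε) * (d * (1 - d) / 4 * m) := by ring
    _ ≤ (d - 2 * ε) * #X := mul_le_mul_of_nonneg_left hX (by linarith [hp.eight_eps_le, hp.eps_pos])
  have hεX' : ε * m ≤ #X := hεX.trans <| by
    nlinarith [hp.d_lt_one, hp.eps_pos, (Nat.cast_nonneg #X : (0 : ℝ) ≤ #X)]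
  have hXsub : X ⊆ V1 i := Finset.sdiff_subset
  have hXim : #(X.image σ) = #X := Finset.card_image_of_injOn ((hP.injOn_clusterSucc i).mono hXsub)
  -- pick `u ∈ C` of typical degree into `σ '' X` such that `σ u` has typical degree from `X`
  set Bad₁ := ({a | (#{v ∈ X.image σ | G (i, a) (i + 1, v)} : ℝ) < (d - 2 * ε) * #(X.image σ)} :
    Finset (Fin m))
  have hBad₁ : (#Bad₁ : ℝ) < ε * m := by
    simpa using hG.card_lowDegree_lt hp.eps_pos (Y := X.image σ) (by simpa [hXim] using hεX')
  set Bad₂ := ({v | (#{a ∈ X | G (i, a) (i + 1, v)} : ℝ) < (d - 2 * ε) * #X} : Finset (Fin m))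
  have hBad₂ : (#Bad₂ : ℝ) < ε * Fintype.card (Fin m) :=
    hG.flip.card_lowDegree_lt hp.eps_pos (by simpa using hεX')
  rw [Fintype.card_fin] at hBad₂
  set Pull := ({u ∈ C | σ u ∈ Bad₂} : Finset (Fin m))
  have hPull : #Pull ≤ #Bad₂ := Finset.card_le_card_of_injOn σ
    (fun u hu => (Finset.mem_filter.mp hu).2)
    ((hP.injOn_clusterSucc i).mono fun u hu => (mem_cyclePart.mp (Finset.mem_filter.mp hu).1).1)
  obtain ⟨u, hu⟩ : (C \ (Bad₁ ∪ Pull)).Nonempty := by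
    rw [← Finset.card_pos]
    have h1 : (#C : ℝ) ≤ #(C \ (Bad₁ ∪ Pull)) + #(Bad₁ ∪ Pull) := by
      exact_mod_cast Finset.card_le_card_sdiff_add_card
    have h2 : (#(Bad₁ ∪ Pull) : ℝ) ≤ #Bad₁ + #Pull := by exact_mod_cast Finset.card_union_le _ _
    have h3 : (#Pull : ℝ) ≤ #Bad₂ := by exact_mod_cast hPull
    have h4 : 2 * ε * m ≤ (d / 2 - 2 * ε) * m :=
      mul_le_mul_of_nonneg_right (by linarith [hp.eight_eps_le, hp.eps_pos]) (Nat.cast_nonneg m)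
    have : (0 : ℝ) < #(C \ (Bad₁ ∪ Pull)) := by linarith
    exact_mod_cast this
  simp only [Finset.mem_sdiff, Finset.mem_union, not_or] at hu
  obtain ⟨huC, huBad₁, huPull⟩ := hu
  have huBad₂ : σ u ∉ Bad₂ := fun h => huPull (Finset.mem_filter.mpr ⟨huC, h⟩)
  simp only [Bad₁, Bad₂, Finset.mem_filter, Finset.mem_univ, true_and, not_lt] at huBad₁ huBad₂
  refine hP.exists_ssubset_of_le_card_rotate3 hp hG huC ?_ ?_
  · rw [hP.card_filter_clusterSucc (q := fun v => G (i, u) (i + 1, v)) hXsub]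
    rw [hXim] at huBad₁
    linarith
  · linarith

theorem cyclePart_succ_nonempty (hP : IsRematching G V1 V2 e F P)
    (hV1 : (1 - d / 2) * m ≤ #(V1 (i + 1))) (hV2 : (1 - d / 2) * m ≤ #(V2 (i + 1)))
    (hcard : #(V1 i) = #(V2 (i + 1))) (hsmall : #(V1 i \ cyclePart V1 e P w₀ i) < (1 - d) * m) :
    (cyclePart V1 e P w₀ (i + 1)).Nonempty := by
  set C := cyclePart V1 e P w₀ i
  set σ := clusterSucc e P i
  set T := V1 (i + 1) ∩ V2 (i + 1)
  have hCsub : C ⊆ V1 i := Finset.filter_subset _ _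
  have hCim : #(C.image σ) = #C := Finset.card_image_of_injOn ((hP.injOn_clusterSucc i).mono hCsub)
  have hT : (1 - d) * m ≤ #T := by
    have h1 : (#T : ℝ) + #(V1 (i + 1) ∪ V2 (i + 1)) = #(V1 (i + 1)) + #(V2 (i + 1)) := by
      exact_mod_cast Finset.card_inter_add_card_union _ _
    have h2 : (#(V1 (i + 1) ∪ V2 (i + 1)) : ℝ) ≤ m := by
      exact_mod_cast (Finset.card_le_univ _).trans_eq (Fintype.card_fin m)
    linarith
  have hC : (#(V1 i) : ℝ) ≤ #(V1 i \ C) + #C := by exact_mod_cast Finset.card_le_card_sdiff_add_card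
  have hunion : (#(C.image σ ∪ T) : ℝ) ≤ #(V2 (i + 1)) := by
    refine Nat.cast_le.mpr (Finset.card_le_card (Finset.union_subset (fun v hv => ?_)
      Finset.inter_subset_right))
    obtain ⟨u, hu, rfl⟩ := Finset.mem_image.mp hv
    exact (hP.clusterSucc_spec (hCsub hu)).2.1
  obtain ⟨v, hv⟩ : (C.image σ ∩ T).Nonempty := by
    rw [← Finset.card_pos]
    have h : (#(C.image σ ∩ T) : ℝ) + #(C.image σ ∪ T) = #(C.image σ) + #T := by
      exact_mod_cast Finset.card_inter_add_card_union _ _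
    have hcard' : (#(V1 i) : ℝ) = #(V2 (i + 1)) := by exact_mod_cast hcard
    have hCim' : (#(C.image σ) : ℝ) = #C := by exact_mod_cast hCim
    have : (0 : ℝ) < #(C.image σ ∩ T) := by linarith
    exact_mod_cast this
  obtain ⟨hvC, hvT⟩ := Finset.mem_inter.mp hv
  obtain ⟨u, hu, rfl⟩ := Finset.mem_image.mp hvC
  obtain ⟨huV, hwu⟩ := mem_cyclePart.mp hu
  refine ⟨σ u, mem_cyclePart.mpr ⟨(Finset.mem_inter.mp hvT).1, ?_⟩⟩
  rw [← (hP.clusterSucc_spec huV).1]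
  exact sameCycle_apply_right.mpr hwu

theorem exists_ssubset_of_le_card_rotate4 [Finite W] (hp : IsHierarchy m ε d)
    (hG : SuperRegularPair (fun u v => G (i, u) (i + 1, v)) ε d) (hP : IsRematching G V1 V2 e F P)
    {z u₁ : Fin m} (hz : z ∈ V1 i \ cyclePart V1 e P w₀ i) (hu₁ : u₁ ∈ cyclePart V1 e P w₀ i)
    (g₀ : G (i, z) (i + 1, clusterSucc e P i u₁)) {T : Finset (Fin m)}
    (hT : T ⊆ (cyclePart V1 e P w₀ i).erase u₁)
    (hTz : ∀ b ∈ T, G (i, b) (i + 1, clusterSucc e P i z))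
    (hN : 2 * (ε * m) + 1 ≤ #{u ∈ T | G (i, u₁) (i + 1, clusterSucc e P i u)}) :
    ∃ P', IsRematching G V1 V2 e F P' ∧ {w | P.SameCycle w₀ w} ⊂ {w | P'.SameCycle w₀ w} := by
  have : Nonempty (Fin m) := ⟨⟨0, hp.m_pos⟩⟩
  set σ := clusterSucc e P i
  set x := e (i, u₁)
  rw [mem_sdiff_cyclePart] at hz
  rw [mem_cyclePart] at hu₁
  have hTC : ∀ b ∈ T, b ≠ u₁ ∧ b ∈ V1 i ∧ P.SameCycle w₀ (e (i, b)) := fun b hb => by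
    have h := Finset.mem_erase.mp (hT hb)
    exact ⟨h.1, mem_cyclePart.mp h.2⟩
  have hpos : ∀ b ∈ T, ∃ n, 0 < n ∧ n < Function.minimalPeriod P x ∧ (P ^ n) x = e (i, b) := by
    intro b hb
    obtain ⟨hbu₁, -, hwb⟩ := hTC b hb
    obtain ⟨n, hn, hnb⟩ := (hu₁.2.symm.trans hwb).exists_lt_minimalPeriod_pow_eq
    refine ⟨n, Nat.pos_of_ne_zero fun h0 => hbu₁ ?_, hn, hnb⟩
    simpa [h0, x] using hnb.symm
  choose! pos hpos0 hposℓ hposeq using hpos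
  have hposinj : Set.InjOn pos T := fun a ha b hb h => by
    exact (Prod.mk.inj (e.injective ((hposeq a ha).symm.trans (h ▸ hposeq b hb)))).2
  set N := ({u ∈ T | G (i, u₁) (i + 1, σ u)} : Finset (Fin m))
  set L := ⌈ε * m⌉₊
  have hL : ε * m ≤ L := Nat.le_ceil _
  have hL' : (L : ℝ) < ε * m + 1 := Nat.ceil_lt_add_one (mul_nonneg hp.eps_pos.le (Nat.cast_nonneg m))
  have hNT : #N ≤ #T := Finset.card_filter_le _ _
  -- `Q` holds the `L` vertices of `T` furthest along the cycle, so `x₂ ∉ Q` comes before `x₃ ∈ Q`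
  obtain ⟨Q, hQT, hQL, hQtop⟩ := Finset.exists_subset_card_eq_forall_lt hposinj
    (L := L) (by exact_mod_cast (show (L : ℝ) ≤ #T by
      linarith [(Nat.cast_le (α := ℝ)).mpr hNT, mul_nonneg hp.eps_pos.le (Nat.cast_nonneg m)]))
  have hNQ : ε * m ≤ #(N \ Q) := by
    have h : (#N : ℝ) ≤ #(N \ Q) + #Q := by exact_mod_cast Finset.card_le_card_sdiff_add_card
    rw [hQL] at h
    linarith
  have hQim : #(Q.image σ) = #Q := Finset.card_image_of_injOn
    ((hP.injOn_clusterSucc i).mono fun b hb => (hTC b (hQT hb)).2.1)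
  obtain ⟨u₂, hu₂, v, hv, g₂⟩ := hG.exists_adj hp.eps_pos hp.two_eps_lt
    (X := N \ Q) (Y := Q.image σ) (by simpa using hNQ) (by simpa [hQim, hQL] using hL)
  obtain ⟨b, hbQ, rfl⟩ := Finset.mem_image.mp hv
  obtain ⟨hu₂N, hu₂Q⟩ := Finset.mem_sdiff.mp hu₂
  obtain ⟨hu₂T, g₁⟩ := Finset.mem_filter.mp hu₂N
  have hbT := hQT hbQ
  exact hP.exists_ssubset_of_rotate4 hz.1 hu₁.1 (hTC u₂ hu₂T).2.1 (hTC b hbT).2.1 hz.2 hu₁.2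
    (hpos0 u₂ hu₂T) (hQtop u₂ (Finset.mem_sdiff.mpr ⟨hu₂T, hu₂Q⟩) b hbQ) (hposℓ b hbT)
    (hposeq u₂ hu₂T) (hposeq b hbT) g₀ g₁ g₂ (hTz b hbT)

theorem exists_ssubset_of_absorb [Finite W] (hp : IsHierarchy m ε d)
    (hG : SuperRegularPair (fun u v => G (i, u) (i + 1, v)) ε d)
    (hV1 : (1 - d / 2) * m ≤ #(V1 i)) (hV2 : (1 - d / 2) * m ≤ #(V2 (i + 1)))
    (hcard : #(V1 i) = #(V2 (i + 1))) (hP : IsRematching G V1 V2 e F P) {z : Fin m}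
    (hz : z ∈ V1 i \ cyclePart V1 e P w₀ i)
    (hsmall : #(V1 i \ cyclePart V1 e P w₀ i) < d * (1 - d) / 4 * m) :
    ∃ P', IsRematching G V1 V2 e F P' ∧ {w | P.SameCycle w₀ w} ⊂ {w | P'.SameCycle w₀ w} := by
  have : Nonempty (Fin m) := ⟨⟨0, hp.m_pos⟩⟩
  set C := cyclePart V1 e P w₀ i
  set X := V1 i \ C
  set σ := clusterSucc e P i
  have hCsub : C ⊆ V1 i := Finset.filter_subset _ _
  have hX : (d / 2 - ε) * m - #X > (d / 4 - ε) * m := by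
    nlinarith [hp.d_pos, hp.d_lt_one, hp.m_pos]
  set A := ({u ∈ C | G (i, z) (i + 1, σ u)} : Finset (Fin m))
  set B := ({b ∈ C | G (i, b) (i + 1, σ z)} : Finset (Fin m))
  have hA : (d / 4 - ε) * m < #A :=
    hX.trans_le ((sub_le_sub_right (hP.le_card_filter_adj_clusterSucc hG hV2 hcard z) _).trans
      (sub_card_sdiff_cyclePart_le _))
  have hB : (d / 4 - ε) * m < #B :=
    hX.trans_le ((sub_le_sub_right (le_card_filter_adj hG hV1 (σ z)) _).trans (sub_card_sdiff_cyclePart_le _))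
  have hεD : ε * m ≤ (d / 4 - ε) * m :=
    mul_le_mul_of_nonneg_right (by linarith [hp.eight_eps_le, hp.eps_pos]) (Nat.cast_nonneg m)
  have hBim : #(B.image σ) = #B := Finset.card_image_of_injOn
    ((hP.injOn_clusterSucc i).mono fun b hb => hCsub (Finset.mem_filter.mp hb).1)
  set Bad := ({a | (#{v ∈ B.image σ | G (i, a) (i + 1, v)} : ℝ) < (d - 2 * ε) * #(B.image σ)} :
    Finset (Fin m))
  have hBε : ε * m ≤ #(B.image σ) := by rw [hBim]; exact hεD.trans hB.le
  have hBad : (#Bad : ℝ) < ε * m := by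
    simpa using hG.card_lowDegree_lt hp.eps_pos (Y := B.image σ) (by simpa using hBε)
  obtain ⟨u₁, hu₁⟩ : (A \ Bad).Nonempty := by
    rw [← Finset.card_pos]
    have h : (#A : ℝ) ≤ #(A \ Bad) + #Bad := by exact_mod_cast Finset.card_le_card_sdiff_add_card
    have : (0 : ℝ) < #(A \ Bad) := by linarith
    exact_mod_cast this
  obtain ⟨hu₁A, hu₁Bad⟩ := Finset.mem_sdiff.mp hu₁
  obtain ⟨hu₁C, g₀⟩ := Finset.mem_filter.mp hu₁A
  simp only [Bad, Finset.mem_filter, Finset.mem_univ, true_and, not_lt, hBim] at hu₁Bad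
  rw [← hP.card_filter_clusterSucc (q := fun v => G (i, u₁) (i + 1, v))
    fun b hb => hCsub (Finset.mem_filter.mp hb).1] at hu₁Bad
  have herase : (#{u ∈ B | G (i, u₁) (i + 1, σ u)} : ℝ) ≤
      #{u ∈ B.erase u₁ | G (i, u₁) (i + 1, σ u)} + 1 := by
    rw [Finset.filter_erase]
    exact_mod_cast (Nat.sub_le_iff_le_add.mp Finset.pred_card_le_card_erase)
  refine hP.exists_ssubset_of_le_card_rotate4 hp hG hz hu₁C g₀ (T := B.erase u₁)
    (Finset.erase_subset_erase u₁ (Finset.filter_subset _ _))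
    (fun b hb => (Finset.mem_filter.mp (Finset.mem_of_mem_erase hb)).2) ?_
  have hBdeg : 3 * (ε * m) ≤ (d - 2 * ε) * #B := calc
    3 * (ε * m) ≤ (d - 2 * ε) * ((d / 4 - ε) * m) := by
      nlinarith [hp.three_eps_le_mul, hp.m_pos]
    _ ≤ (d - 2 * ε) * #B := mul_le_mul_of_nonneg_left hB.le (by linarith [hp.eight_eps_le, hp.eps_pos])
  linarith [hp.ten_le]

theorem exists_ssubset [Finite W] (hp : IsHierarchy m ε d)
    (hG : ∀ i, SuperRegularPair (fun u v => G (i, u) (i + 1, v)) ε d)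
    (hV : ∀ i, (1 - d / 2) * m ≤ #(V1 i) ∧ (1 - d / 2) * m ≤ #(V2 i))
    (hcard : ∀ i, #(V1 i) = #(V2 (i + 1))) (hP : IsRematching G V1 V2 e F P)
    (h₀ : ∃ i, (cyclePart V1 e P w₀ i).Nonempty)
    (hne : ∃ j, (V1 j \ cyclePart V1 e P w₀ j).Nonempty) :
    ∃ P', IsRematching G V1 V2 e F P' ∧ {w | P.SameCycle w₀ w} ⊂ {w | P'.SameCycle w₀ w} := by
  by_cases hbig : ∃ i, (cyclePart V1 e P w₀ i).Nonempty ∧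
      d * (1 - d) / 4 * m ≤ #(V1 i \ cyclePart V1 e P w₀ i)
  · obtain ⟨i, ⟨u, hu⟩, hX⟩ := hbig
    rcases le_or_gt (#(cyclePart V1 e P w₀ i) : ℝ) ((d / 2 - 2 * ε) * m) with hC | hC
    · exact hP.exists_ssubset_of_card_cyclePart_le hp (hG i) (hV i).1 (hV (i + 1)).2 (hcard i) hu hC
    · exact hP.exists_ssubset_of_lt_card_cyclePart hp (hG i) hC hX
  · -- every cluster meets the cycle and misses few of its vertices, so absorb one
    push Not at hbig
    have hθ : d * (1 - d) / 4 * m ≤ (1 - d) * m := mul_le_mul_of_nonneg_right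
      (by nlinarith [hp.d_pos, hp.d_lt_one]) (Nat.cast_nonneg m)
    obtain ⟨i₀, hi₀⟩ := h₀
    have hall : ∀ j, (cyclePart V1 e P w₀ j).Nonempty := Fin.forall_of_add_one hi₀ fun j hj =>
      hP.cyclePart_succ_nonempty (hV (j + 1)).1 (hV (j + 1)).2 (hcard j) ((hbig j hj).trans_le hθ)
    obtain ⟨j, z, hz⟩ := hne
    exact hP.exists_ssubset_of_absorb hp (hG j) (hV j).1 (hV (j + 1)).2 (hcard j) hz
      (hbig j (hall j))

theorem sameCycle_of_forall_sameCycle [Finite W] (hP : IsRematching G V1 V2 e F P)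
    (hcyc : ∀ w, ∃ i, ∃ u ∈ V1 i, F.SameCycle w (e (i, u)))
    (hall : ∀ i, ∀ u ∈ V1 i, P.SameCycle w₀ (e (i, u))) (w : W) : P.SameCycle w₀ w := by
  obtain ⟨i, u, hu, hw⟩ := hcyc w
  obtain ⟨_, ⟨j, v, hv, rfl⟩, -, hPw⟩ := exists_mem_sameCycle_of_eqOn
    (M := {w | ∃ j, ∃ v ∈ V1 j, e (j, v) = w})
    (fun y hy => hP.1 y fun j v hv h => hy ⟨j, v, hv, h.symm⟩) hw ⟨i, u, hu, rfl⟩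
  exact (hall j v hv).trans hPw.symm

end IsRematching

theorem exists_isRematching_sameCycle [Finite W] (hp : IsHierarchy m ε d)
    (hG : ∀ i, SuperRegularPair (fun u v => G (i, u) (i + 1, v)) ε d)
    (hV : ∀ i, (1 - d / 2) * m ≤ #(V1 i) ∧ (1 - d / 2) * m ≤ #(V2 i))
    (hcard : ∀ i, #(V1 i) = #(V2 (i + 1)))
    (hF : ∀ i, ∀ v ∈ V2 (i + 1), ∃ u ∈ V1 i, F (e (i, u)) = e (i + 1, v))
    (hcyc : ∀ w, ∃ i, ∃ u ∈ V1 i, F.SameCycle w (e (i, u))) :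
    ∃ P, IsRematching G V1 V2 e F P ∧ ∀ w w', P.SameCycle w w' := by
  have : Nonempty (Fin m) := ⟨⟨0, hp.m_pos⟩⟩
  obtain ⟨P₀, hP₀⟩ := exists_isRematching (G := G) hF fun i =>
    (hG i).exists_injOn hp.eps_pos (by linarith [hp.eight_eps_le, hp.eps_pos])
      (by simpa using (hV i).1) (by simpa using (hV (i + 1)).2) (hcard i)
  obtain ⟨u₀, hu₀⟩ : (V1 0).Nonempty := Finset.card_pos.mp <| by
    have : (0 : ℝ) < #(V1 0) := (hV 0).1.trans_lt' <|
      mul_pos (by linarith [hp.d_lt_one]) (Nat.cast_pos.mpr hp.m_pos)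
    exact_mod_cast this
  set w₀ := e (0, u₀)
  obtain ⟨P, hP, hmax⟩ := Set.exists_max_image {P | IsRematching G V1 V2 e F P}
    (fun P => Set.ncard {w | P.SameCycle w₀ w}) (Set.toFinite _) ⟨P₀, hP₀⟩
  have hall : ∀ i, ∀ u ∈ V1 i, P.SameCycle w₀ (e (i, u)) := by
    by_contra! hne
    obtain ⟨j, u, hu, hwu⟩ := hne
    obtain ⟨P', hP', hss⟩ := hP.exists_ssubset hp hG hV hcard
      ⟨0, u₀, mem_cyclePart.mpr ⟨hu₀, SameCycle.refl _ _⟩⟩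
      ⟨j, u, mem_sdiff_cyclePart.mpr ⟨hu, hwu⟩⟩
    exact (hmax P' hP').not_gt (Set.ncard_lt_ncard hss (Set.toFinite _))
  exact ⟨P, hP, fun w w' => (hP.sameCycle_of_forall_sameCycle hcyc hall w).symm.trans
    (hP.sameCycle_of_forall_sameCycle hcyc hall w')⟩

end Rematching

/-- Lemma: merging the cycles of a 1-factor into a Hamilton cycle,
case `J = E(C)`. With the hierarchy `0 < 1/m ≪ ε ≪ d < 1` and `1/m ≪ 1/k`:
the clusters are `V_i = {i} × Fin m` for `i : Fin (k+1)`, arranged in the directed cycle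
`C` given by the cyclic successor `i ↦ i+1`. `G` is a digraph on the union of the
clusters such that each `G[V_i, V_{i+1}]` is `(ε,d)`-superregular. For each `i`,
`V1 i ⊆ V_i` and `V2 i ⊆ V_i` have size at least `(1−d/2)m` with `|V1 i| = |V2 (i+1)|`.
`F` is a 1-regular digraph (a permutation of a possibly larger vertex set `W`, into which
the clusters embed via `e`) such that each `F[V1 i, V2 (i+1)]` is a perfect matching and
every cycle of `F` meets some `V1 i`. Then one can replace each matching
`F[V1 i, V2 (i+1)]` by a perfect matching of `G[V1 i, V2 (i+1)]` (keeping all other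
edges of `F`) so that the resulting 1-regular digraph `F'` is a single cycle on `V(F)`. -/
theorem stmt19 : ∀ d : ℝ, 0 < d → d < 1 →
    ∃ ε₀ : ℝ, 0 < ε₀ ∧ ∀ ε : ℝ, 0 < ε → ε ≤ ε₀ →
    ∀ k : ℕ, ∃ m₀ : ℕ, ∀ m : ℕ, m₀ ≤ m →
    ∀ G : (Fin (k + 1) × Fin m) → (Fin (k + 1) × Fin m) → Prop,
    (∀ i : Fin (k + 1),
      SuperRegularPair (fun u v : Fin m => G (i, u) (i + 1, v)) ε d) →
    ∀ V1 V2 : Fin (k + 1) → Finset (Fin m),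
    (∀ i, (1 - d / 2) * (m : ℝ) ≤ ((V1 i).card : ℝ) ∧
          (1 - d / 2) * (m : ℝ) ≤ ((V2 i).card : ℝ)) →
    (∀ i, (V1 i).card = (V2 (i + 1)).card) →
    ∀ (W : Type) (_ : Fintype W) (e : (Fin (k + 1) × Fin m) ↪ W) (F : Equiv.Perm W),
    (∀ i : Fin (k + 1),
      (∀ u ∈ V1 i, ∃ v ∈ V2 (i + 1), F (e (i, u)) = e (i + 1, v)) ∧
      (∀ v ∈ V2 (i + 1), ∃ u ∈ V1 i, F (e (i, u)) = e (i + 1, v))) →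
    (∀ w : W, ∃ i : Fin (k + 1), ∃ u ∈ V1 i, F.SameCycle w (e (i, u))) →
    ∃ F' : Equiv.Perm W,
      (∀ w w' : W, F'.SameCycle w w') ∧
      (∀ w : W, (∀ i : Fin (k + 1), ∀ u ∈ V1 i, w ≠ e (i, u)) → F' w = F w) ∧
      (∀ i : Fin (k + 1), ∀ u ∈ V1 i, ∃ v ∈ V2 (i + 1),
        F' (e (i, u)) = e (i + 1, v) ∧ G (i, u) (i + 1, v)) := by
  intro d hd hd1
  have hd1' : 0 < 1 - d := sub_pos.mpr hd1
  refine ⟨d ^ 2 * (1 - d) / 100, by positivity, fun ε hε hεd k => ⟨⌈10 / ε⌉₊, ?_⟩⟩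
  intro m hm G hG V1 V2 hV hcard W _ e F hF hcyc
  have hp : IsHierarchy m ε d := ⟨hε, hd, hd1, by linarith, by
    have h := (Nat.ceil_le.mp hm : 10 / ε ≤ m)
    rwa [div_le_iff₀ hε, mul_comm] at h⟩
  obtain ⟨P, hP, hconn⟩ := exists_isRematching_sameCycle hp hG hV hcard (fun i => (hF i).2) hcyc
  exact ⟨P, hconn, hP.1, hP.2⟩
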